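/- The group Γ is right-orderable: there exists a linear order ≤ on Γ such that x ≤ y implies xz ≤ yz for all x, y, z ∈ Γ. -/

import Mathlib

namespace PinkGroup

mutual
  /-- forward action of the generator `a` -/
  def aF : List Bool → List Bool
    | [] => []
    | false :: w => true :: bF w
    | true :: w => false :: w
  /-- forward action of the generator `b` -/
  def bF : List Bool → List Bool
    | [] => []
    | false :: w => false :: aF w
    | true :: w => true :: w
end

mutual
  /-- inverse of `aF` -/
  def aIF : List Bool → List Bool
    | [] => []
    | true :: w => false :: bIF w
    | false :: w => true :: w
  /-- inverse of `bF` -/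
  def bIF : List Bool → List Bool
    | [] => []
    | false :: w => false :: aIF w
    | true :: w => true :: w
end

lemma inv_all (w : List Bool) :
    aF (aIF w) = w ∧ bF (bIF w) = w ∧ aIF (aF w) = w ∧ bIF (bF w) = w := by
  induction w with
  | nil => simp [aF, bF, aIF, bIF]
  | cons x w ih =>
    cases x <;>
      simp [aF, bF, aIF, bIF, ih.1, ih.2.1, ih.2.2.1, ih.2.2.2]

/-- The generator `a` of Pink's group: `(1w)^a = 2 w^b`, `(2w)^a = 1w`
(where the letter `1` is `false` and the letter `2` is `true`). -/
def a : Equiv.Perm (List Bool) :=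
  ⟨aF, aIF, fun w => (inv_all w).2.2.1, fun w => (inv_all w).1⟩

/-- The generator `b` of Pink's group: `(1w)^b = 1 w^a`, `(2w)^b = 2w`. -/
def b : Equiv.Perm (List Bool) :=
  ⟨bF, bIF, fun w => (inv_all w).2.2.2, fun w => (inv_all w).2.1⟩

/-- Pink's group `Γ`, the iterated monodromy group of `z^2 - 1`. -/
def Gam : Subgroup (Equiv.Perm (List Bool)) := Subgroup.closure {a, b}

lemma a_mem : a ∈ Gam := Subgroup.subset_closure (by simp)

lemma b_mem : b ∈ Gam := Subgroup.subset_closure (by simp)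


abbrev P := Equiv.Perm (List Bool)

inductive Ltr | gA | gA' | gB | gB'
deriving DecidableEq

open Ltr

def ltrPerm : Ltr → P
  | gA => a | gA' => a⁻¹ | gB => b | gB' => b⁻¹

def eval (w : List Ltr) : P := (w.map ltrPerm).prod

def linv : Ltr → Ltr
  | gA => gA' | gA' => gA | gB => gB' | gB' => gB

def τl : Ltr → Bool → Bool
  | gA, s => !s | gA', s => !s | gB, s => s | gB', s => s

def em : Ltr → Bool → List Ltr
  | gA, false => [gB] | gA, true => []
  | gA', true => [gB'] | gA', false => []
  | gB, false => [gA] | gB, true => []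
  | gB', false => [gA'] | gB', true => []

def outS : List Ltr → Bool → Bool
  | [], s => s
  | l :: w, s => τl l (outS w s)

def secW : List Ltr → Bool → List Ltr
  | [], _ => []
  | l :: w, s => em l (outS w s) ++ secW w s

def eAL : Ltr → ℤ | gA => 1 | gA' => -1 | _ => 0
def eBL : Ltr → ℤ | gB => 1 | gB' => -1 | _ => 0
def eA (w : List Ltr) : ℤ := (w.map eAL).sum
def eB (w : List Ltr) : ℤ := (w.map eBL).sum

lemma eval_nil : eval [] = 1 := rfl
lemma eval_cons (l w) : eval (l :: w) = ltrPerm l * eval w := by simp [eval]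
lemma eval_append (u v) : eval (u ++ v) = eval u * eval v := by simp [eval]

lemma a_apply (x u) : a (x :: u) = (!x) :: (if x then u else b u) := by
  cases x <;> rfl
lemma ainv_apply (x u) : a⁻¹ (x :: u) = (!x) :: (if x then b⁻¹ u else u) := by
  cases x <;> rfl
lemma b_apply (x u) : b (x :: u) = x :: (if x then u else a u) := by
  cases x <;> rfl
lemma binv_apply (x u) : b⁻¹ (x :: u) = x :: (if x then u else a⁻¹ u) := by
  cases x <;> rfl

lemma ltr_sem (l : Ltr) (s : Bool) (u : List Bool) :
    ltrPerm l (s :: u) = τl l s :: eval (em l s) u := by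
  cases l <;> cases s <;>
    simp [ltrPerm, τl, em, eval, a_apply, ainv_apply, b_apply, binv_apply]

lemma ltr_nil (l : Ltr) : ltrPerm l [] = [] := by
  cases l <;> rfl

lemma eval_nil_apply (w : List Ltr) : eval w [] = [] := by
  induction w with
  | nil => rfl
  | cons l w ih => rw [eval_cons, Equiv.Perm.mul_apply, ih, ltr_nil]

lemma sem (w : List Ltr) (s : Bool) (u : List Bool) :
    eval w (s :: u) = outS w s :: eval (secW w s) u := by
  induction w with
  | nil => rfl
  | cons l w ih =>
    rw [eval_cons, Equiv.Perm.mul_apply, ih, ltr_sem, secW, eval_append,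
      Equiv.Perm.mul_apply]
    rfl
lemma eA_cons (l w) : eA (l :: w) = eAL l + eA w := by simp [eA]
lemma eB_cons (l w) : eB (l :: w) = eBL l + eB w := by simp [eB]
lemma eA_append (u v) : eA (u ++ v) = eA u + eA v := by simp [eA]
lemma eB_append (u v) : eB (u ++ v) = eB u + eB v := by simp [eB]

/-- parity of eA determines level-1 behaviour -/
lemma outS_parity (w : List Ltr) (s : Bool) :
    outS w s = if eA w % 2 = 0 then s else !s := by
  induction w with
  | nil => simp [outS, eA]
  | cons l w ih =>
    rw [outS, ih, eA_cons]
    cases l <;> by_cases he : eA w % 2 = 0 <;>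
      simp only [τl, eAL, he, if_true, if_false, Bool.not_not] <;>
      · have h2 : ¬ ((1:ℤ) + eA w) % 2 = 0 ∨ ¬ ((-1:ℤ) + eA w) % 2 = 0 ∨
          ((1:ℤ) + eA w) % 2 = 0 ∨ ((0:ℤ) + eA w) % 2 = 0 ∨ True := by omega
        first
        | (rw [if_neg (by omega)]; simp)
        | (rw [if_pos (by omega)])
        | (rw [if_neg (by omega)])
        | simp [he]
        all_goals omega

lemma outS_of_even (w : List Ltr) (s : Bool) (h : eA w % 2 = 0) : outS w s = s := by
  rw [outS_parity, if_pos h]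

lemma outS_compl (w : List Ltr) : outS w true = !(outS w false) := by
  rw [outS_parity, outS_parity]; split <;> rfl

lemma em_len (l : Ltr) (t : Bool) :
    (em l t).length + (em l (!t)).length = 1 := by
  cases l <;> cases t <;> rfl

lemma secW_len (w : List Ltr) :
    (secW w false).length + (secW w true).length = w.length := by
  induction w with
  | nil => rfl
  | cons l w ih =>
    rw [secW, secW, List.length_append, List.length_append, List.length_cons,
      outS_compl]
    have := em_len l (outS w false)
    omega

lemma secW_len_le (w : List Ltr) (s : Bool) : (secW w s).length ≤ w.length := by
  have := secW_len w; cases s <;> omega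

lemma em_eA (l : Ltr) (t : Bool) :
    eA (em l t) + eA (em l (!t)) = eBL l := by
  cases l <;> cases t <;> rfl

lemma em_eB (l : Ltr) (t : Bool) :
    eB (em l t) + eB (em l (!t)) = eAL l := by
  cases l <;> cases t <;> rfl

lemma secW_eA (w : List Ltr) :
    eA (secW w false) + eA (secW w true) = eB w := by
  induction w with
  | nil => rfl
  | cons l w ih =>
    rw [secW, secW, eA_append, eA_append, eB_cons, outS_compl, ← ih]
    have := em_eA l (outS w false)
    omega

lemma secW_eB (w : List Ltr) :
    eB (secW w false) + eB (secW w true) = eA w := by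
  induction w with
  | nil => rfl
  | cons l w ih =>
    rw [secW, secW, eB_append, eB_append, eA_cons, outS_compl, ← ih]
    have := em_eB l (outS w false)
    omega

def invW (w : List Ltr) : List Ltr := (w.map linv).reverse

lemma ltr_inv (l : Ltr) : ltrPerm (linv l) = (ltrPerm l)⁻¹ := by
  cases l <;> simp [ltrPerm, linv]

lemma invW_cons (l w) : invW (l :: w) = invW w ++ [linv l] := by simp [invW]

lemma eval_invW (w : List Ltr) : eval (invW w) = (eval w)⁻¹ := by
  induction w with
  | nil => simp [invW, eval]
  | cons l w ih =>
    rw [invW_cons, eval_append, ih,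
      show eval [linv l] = (ltrPerm l)⁻¹ by simp [eval, ltr_inv],
      eval_cons, mul_inv_rev]

lemma eAL_linv (l) : eAL (linv l) = -eAL l := by cases l <;> rfl
lemma eBL_linv (l) : eBL (linv l) = -eBL l := by cases l <;> rfl

lemma eA_invW (w : List Ltr) : eA (invW w) = -eA w := by
  induction w with
  | nil => rfl
  | cons l w ih =>
    rw [invW_cons, eA_append, ih, eA_cons]
    simp [eA, eAL_linv]

lemma eB_invW (w : List Ltr) : eB (invW w) = -eB w := by
  induction w with
  | nil => rfl
  | cons l w ih =>
    rw [invW_cons, eB_append, ih, eB_cons]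
    simp [eB, eBL_linv]
def Red (w : List Ltr) : Prop := List.Chain' (fun x y => y ≠ linv x) w

lemma cancel (w : List Ltr) (h : ¬ Red w) :
    ∃ w', w'.length + 2 = w.length ∧ eval w' = eval w ∧
      eA w' = eA w ∧ eB w' = eB w := by
  induction w with
  | nil => exact absurd List.isChain_nil h
  | cons l w ih =>
    rw [Red, List.Chain', List.isChain_cons] at h
    by_cases hA : ∀ y ∈ w.head?, y ≠ linv l
    · have hB : ¬ Red w := fun hr => h ⟨hA, hr⟩
      obtain ⟨w', h1, h2, h3, h4⟩ := ih hB
      exact ⟨l :: w', by simp [← h1], by rw [eval_cons, eval_cons, h2],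
        by rw [eA_cons, eA_cons, h3], by rw [eB_cons, eB_cons, h4]⟩
    · push_neg at hA
      obtain ⟨y, hy, hyl⟩ := hA
      match w, hy with
      | y :: w'', hy' =>
        have hyy : y = linv l := by
          simp at hy'
          first
          | exact hy'.trans hyl
          | exact hy'.symm.trans hyl
        refine ⟨w'', by simp, ?_, ?_, ?_⟩
        · rw [eval_cons, eval_cons, hyy, ltr_inv]
          group
        · rw [eA_cons, eA_cons, hyy, eAL_linv]; ring
        · rw [eB_cons, eB_cons, hyy, eBL_linv]; ring

lemma a_sq (s u) : (a * a) (s :: u) = s :: b u := by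
  cases s <;> rfl

lemma a_nil_pow (m : ℕ) : ((a : P) ^ m) [] = [] := by
  induction m with
  | zero => rfl
  | succ m ih =>
    rw [pow_succ, Equiv.Perm.mul_apply, show (a:P) [] = [] from rfl, ih]

lemma a_sq_pow (m : ℕ) (s u) : (((a*a) : P) ^ m) (s :: u) = s :: ((b:P)^m) u := by
  induction m generalizing u with
  | zero => rfl
  | succ m ih =>
    rw [pow_succ, Equiv.Perm.mul_apply, a_sq, ih, pow_succ, Equiv.Perm.mul_apply]

lemma b_pow (n : ℕ) (u) : ((b : P) ^ n) (false :: u) = false :: ((a:P)^n) u := by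
  induction n generalizing u with
  | zero => rfl
  | succ n ih =>
    rw [pow_succ, Equiv.Perm.mul_apply, show (b:P) (false :: u) = false :: a u from rfl,
      ih, pow_succ, Equiv.Perm.mul_apply]

lemma a_lvl1 (n : ℕ) : ((a : P) ^ n) [false] = [decide (n % 2 = 1)] := by
  induction n with
  | zero => rfl
  | succ n ih =>
    rw [pow_succ', Equiv.Perm.mul_apply, ih]
    rcases Nat.even_or_odd n with h | h
    · have h1 : n % 2 = 0 := Nat.even_iff.mp h
      have h2 : (n+1) % 2 = 1 := by omega
      simp [h1, h2]
      rfl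
    · have h1 : n % 2 = 1 := Nat.odd_iff.mp h
      have h2 : (n+1) % 2 = 0 := by omega
      simp [h1, h2]
      rfl

lemma pow_ne (n : ℕ) (hn : 0 < n) : ((a : P) ^ n) ≠ 1 ∧ ((b : P) ^ n) ≠ 1 := by
  induction n using Nat.strong_induction_on with
  | _ n ih =>
    have ha : ((a : P) ^ n) ≠ 1 := by
      rcases Nat.even_or_odd n with ⟨m, hm⟩ | h
      · subst hm
        intro hc
        have hm1 : 0 < m := by omega
        apply (ih m (by omega) hm1).2
        ext u
        have h2 : ((a:P) ^ (m + m)) (false :: u) = false :: ((b:P)^m) u := by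
          rw [show (a:P)^(m+m) = ((a*a):P)^m by rw [← sq, ← pow_mul]; ring_nf,
            a_sq_pow]
        rw [hc] at h2
        simp at h2
        simp [← h2]
      · intro hc
        have h2 := a_lvl1 n
        rw [hc] at h2
        simp [Nat.odd_iff.mp h] at h2
    refine ⟨ha, fun hc => ha ?_⟩
    ext u
    have h2 := b_pow n u
    rw [hc] at h2
    simp at h2
    simp [← h2]
def Bs (n : ℕ) : List Ltr := List.replicate n Ltr.gB
def Bs' (n : ℕ) : List Ltr := List.replicate n Ltr.gB'

def ShapeF (w : List Ltr) : Prop :=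
  ∃ n, w = Bs n ∨ w = Bs' n ∨ w = Ltr.gA :: Bs n ∨ w = Ltr.gA :: Bs' n
def ShapeT (w : List Ltr) : Prop :=
  w = [] ∨ ∃ n, w = Bs n ++ [Ltr.gA'] ∨ w = Bs' n ++ [Ltr.gA'] ∨
    w = Ltr.gA :: (Bs n ++ [Ltr.gA']) ∨ w = Ltr.gA :: (Bs' n ++ [Ltr.gA'])

open Ltr

lemma outS_Bs (n : ℕ) (s : Bool) : outS (Bs n) s = s := by
  induction n with
  | zero => rfl
  | succ n ih => rw [Bs, List.replicate_succ, outS, ← Bs, ih]; rfl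

lemma outS_Bs' (n : ℕ) (s : Bool) : outS (Bs' n) s = s := by
  induction n with
  | zero => rfl
  | succ n ih => rw [Bs', List.replicate_succ, outS, ← Bs', ih]; rfl

lemma outS_append (u v : List Ltr) (s : Bool) :
    outS (u ++ v) s = outS u (outS v s) := by
  induction u with
  | nil => rfl
  | cons l u ih => rw [List.cons_append, outS, ih, outS]

lemma secW_append (u v : List Ltr) (s : Bool) :
    secW (u ++ v) s = secW u (outS v s) ++ secW v s := by
  induction u with
  | nil => rfl
  | cons l u ih =>
    rw [List.cons_append, secW, ih, secW, outS_append, List.append_assoc]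

lemma em_full (l : Ltr) (t : Bool) (h : (em l t).length = 1) :
    (l = gA ∧ t = false) ∨ (l = gA' ∧ t = true) ∨
    (l = gB ∧ t = false) ∨ (l = gB' ∧ t = false) := by
  cases l <;> cases t <;> simp_all [em]

lemma red_cons (l : Ltr) (w : List Ltr) (h : Red (l :: w)) :
    Red w ∧ ∀ y ∈ w.head?, y ≠ linv l := by
  rw [Red, List.Chain', List.isChain_cons] at h
  exact ⟨h.2, h.1⟩

lemma classify (w : List Ltr) (hred : Red w) :
    ((secW w false).length = w.length → ShapeF w) ∧
    ((secW w true).length = w.length → ShapeT w) := by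
  induction w with
  | nil => exact ⟨fun _ => ⟨0, Or.inl rfl⟩, fun _ => Or.inl rfl⟩
  | cons l w ih =>
    obtain ⟨hrw, hhead⟩ := red_cons l w hred
    have ih' := ih hrw
    constructor
    · intro hlen
      rw [secW, List.length_append, List.length_cons] at hlen
      have e1 : (em l (outS w false)).length ≤ 1 := by
        cases l <;> cases (outS w false) <;> simp [em]
      have e2 := secW_len_le w false
      have h1 : (em l (outS w false)).length = 1 := by omega
      have h2 : (secW w false).length = w.length := by omega
      have hsf : ShapeF w := ih'.1 h2
      obtain ⟨n, hw | hw | hw | hw⟩ := hsf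
      · -- w = Bs n
        have ht : outS w false = false := by rw [hw, outS_Bs]
        rw [ht] at h1
        rcases em_full l false h1 with ⟨hl,_⟩|⟨_,hc⟩|⟨hl,_⟩|⟨hl,_⟩
        · exact ⟨n, Or.inr (Or.inr (Or.inl (by rw [hl, hw])))⟩
        · exact absurd hc (by simp)
        · exact ⟨n+1, Or.inl (by rw [hl, hw, Bs, Bs, List.replicate_succ])⟩
        · -- l = gB' prepended to Bs n : reduced only if n = 0
          cases n with
          | zero => exact ⟨1, Or.inr (Or.inl (by rw [hl, hw]; rfl))⟩
          | succ n =>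
            exfalso
            rw [hw] at hhead
            have := hhead gB (by rw [Bs, List.replicate_succ]; rfl)
            rw [hl] at this
            exact this rfl
      · -- w = Bs' n
        have ht : outS w false = false := by rw [hw, outS_Bs']
        rw [ht] at h1
        rcases em_full l false h1 with ⟨hl,_⟩|⟨_,hc⟩|⟨hl,_⟩|⟨hl,_⟩
        · exact ⟨n, Or.inr (Or.inr (Or.inr (by rw [hl, hw])))⟩
        · exact absurd hc (by simp)
        · cases n with
          | zero => exact ⟨1, Or.inl (by rw [hl, hw]; rfl)⟩
          | succ n =>
            exfalso
            rw [hw] at hhead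
            have := hhead gB' (by rw [Bs', List.replicate_succ]; rfl)
            rw [hl] at this
            exact this rfl
        · exact ⟨n+1, Or.inr (Or.inl (by rw [hl, hw, Bs', Bs', List.replicate_succ]))⟩
      · -- w = gA :: Bs n
        have ht : outS w false = true := by rw [hw, outS, outS_Bs]; rfl
        rw [ht] at h1
        rcases em_full l true h1 with ⟨_,hc⟩|⟨hl,_⟩|⟨_,hc⟩|⟨_,hc⟩
        · exact absurd hc (by simp)
        · exfalso
          rw [hw] at hhead
          have := hhead gA rfl
          rw [hl] at this
          exact this rfl
        · exact absurd hc (by simp)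
        · exact absurd hc (by simp)
      · -- w = gA :: Bs' n
        have ht : outS w false = true := by rw [hw, outS, outS_Bs']; rfl
        rw [ht] at h1
        rcases em_full l true h1 with ⟨_,hc⟩|⟨hl,_⟩|⟨_,hc⟩|⟨_,hc⟩
        · exact absurd hc (by simp)
        · exfalso
          rw [hw] at hhead
          have := hhead gA rfl
          rw [hl] at this
          exact this rfl
        · exact absurd hc (by simp)
        · exact absurd hc (by simp)
    · intro hlen
      rw [secW, List.length_append, List.length_cons] at hlen
      have e1 : (em l (outS w true)).length ≤ 1 := by
        cases l <;> cases (outS w true) <;> simp [em]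
      have e2 := secW_len_le w true
      have h1 : (em l (outS w true)).length = 1 := by omega
      have h2 : (secW w true).length = w.length := by omega
      have hst : ShapeT w := ih'.2 h2
      rcases hst with hw | ⟨n, hw | hw | hw | hw⟩
      · -- w = []
        have ht : outS w true = true := by rw [hw]; rfl
        rw [ht] at h1
        rcases em_full l true h1 with ⟨_,hc⟩|⟨hl,_⟩|⟨_,hc⟩|⟨_,hc⟩
        · exact absurd hc (by simp)
        · exact Or.inr ⟨0, Or.inl (by rw [hl, hw]; rfl)⟩
        · exact absurd hc (by simp)
        · exact absurd hc (by simp)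
      · -- w = Bs n ++ [gA']
        have ht : outS w true = false := by
          rw [hw, outS_append, outS_Bs]; rfl
        rw [ht] at h1
        rcases em_full l false h1 with ⟨hl,_⟩|⟨_,hc⟩|⟨hl,_⟩|⟨hl,_⟩
        · exact Or.inr ⟨n, Or.inr (Or.inr (Or.inl (by rw [hl, hw])))⟩
        · exact absurd hc (by simp)
        · exact Or.inr ⟨n+1, Or.inl (by rw [hl, hw, Bs, Bs, List.replicate_succ]; rfl)⟩
        · cases n with
          | zero => exact Or.inr ⟨1, Or.inr (Or.inl (by rw [hl, hw]; rfl))⟩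
          | succ n =>
            exfalso
            rw [hw] at hhead
            have := hhead gB (by rw [Bs, List.replicate_succ]; rfl)
            rw [hl] at this
            exact this rfl
      · -- w = Bs' n ++ [gA']
        have ht : outS w true = false := by
          rw [hw, outS_append, outS_Bs']; rfl
        rw [ht] at h1
        rcases em_full l false h1 with ⟨hl,_⟩|⟨_,hc⟩|⟨hl,_⟩|⟨hl,_⟩
        · exact Or.inr ⟨n, Or.inr (Or.inr (Or.inr (by rw [hl, hw])))⟩
        · exact absurd hc (by simp)
        · cases n with
          | zero => exact Or.inr ⟨1, Or.inl (by rw [hl, hw]; rfl)⟩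
          | succ n =>
            exfalso
            rw [hw] at hhead
            have := hhead gB' (by rw [Bs', List.replicate_succ]; rfl)
            rw [hl] at this
            exact this rfl
        · exact Or.inr ⟨n+1, Or.inr (Or.inl (by rw [hl, hw, Bs', Bs', List.replicate_succ]; rfl))⟩
      · -- w = gA :: (Bs n ++ [gA'])
        have ht : outS w true = true := by
          rw [hw, outS, outS_append, outS_Bs]; rfl
        rw [ht] at h1
        rcases em_full l true h1 with ⟨_,hc⟩|⟨hl,_⟩|⟨_,hc⟩|⟨_,hc⟩
        · exact absurd hc (by simp)
        · exfalso
          rw [hw] at hhead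
          have := hhead gA rfl
          rw [hl] at this
          exact this rfl
        · exact absurd hc (by simp)
        · exact absurd hc (by simp)
      · -- w = gA :: (Bs' n ++ [gA'])
        have ht : outS w true = true := by
          rw [hw, outS, outS_append, outS_Bs']; rfl
        rw [ht] at h1
        rcases em_full l true h1 with ⟨_,hc⟩|⟨hl,_⟩|⟨_,hc⟩|⟨_,hc⟩
        · exact absurd hc (by simp)
        · exfalso
          rw [hw] at hhead
          have := hhead gA rfl
          rw [hl] at this
          exact this rfl
        · exact absurd hc (by simp)
        · exact absurd hc (by simp)
lemma eA_Bs (n : ℕ) : eA (Bs n) = 0 := by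
  simp [eA, Bs, eAL, List.map_replicate]

lemma eA_Bs' (n : ℕ) : eA (Bs' n) = 0 := by
  simp [eA, Bs', eAL, List.map_replicate]

lemma eB_Bs (n : ℕ) : eB (Bs n) = n := by
  simp [eB, Bs, eBL, List.map_replicate]

lemma eB_Bs' (n : ℕ) : eB (Bs' n) = -n := by
  simp [eB, Bs', eBL, List.map_replicate]

lemma eval_Bs (n : ℕ) : eval (Bs n) = (b : P) ^ n := by
  simp [eval, Bs, List.map_replicate, List.prod_replicate, ltrPerm]

lemma eval_Bs' (n : ℕ) : eval (Bs' n) = ((b : P) ^ n)⁻¹ := by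
  simp [eval, Bs', List.map_replicate, List.prod_replicate, ltrPerm, inv_pow]

lemma sec_of_one (w : List Ltr) (hw : eval w = 1) (s : Bool) :
    outS w s = s ∧ eval (secW w s) = 1 := by
  have h1 : eval w [s] = [s] := by rw [hw]; rfl
  rw [sem, eval_nil_apply] at h1
  have h2 : outS w s = s := by
    have := congrArg (fun l => l.headI) h1
    simpa using this
  refine ⟨h2, Equiv.ext fun u => ?_⟩
  have h3 : eval w (s :: u) = s :: u := by rw [hw]; rfl
  rw [sem, h2] at h3
  have := congrArg (fun l => l.tail) h3
  simpa using this

lemma parity_of_one (w : List Ltr) (hw : eval w = 1) : eA w % 2 = 0 := by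
  by_contra h
  have h1 := (sec_of_one w hw false).1
  rw [outS_parity, if_neg h] at h1
  simp at h1

lemma secW_lt_of_one (w : List Ltr) (hred : Red w) (hw : eval w = 1) (hne : w ≠ []) :
    (secW w false).length < w.length ∧ (secW w true).length < w.length := by
  have hpar := parity_of_one w hw
  have hlen := secW_len w
  have hle0 := secW_len_le w false
  have hle1 := secW_len_le w true
  have hF : (secW w false).length ≠ w.length := by
    intro he
    obtain ⟨n, hs | hs | hs | hs⟩ := (classify w hred).1 he
    · have hn : 0 < n := by
        rcases Nat.eq_zero_or_pos n with h0 | h0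
        · exact absurd (by rw [hs, h0]; rfl) hne
        · exact h0
      exact (pow_ne n hn).2 (by rw [← eval_Bs, ← hs, hw])
    · have hn : 0 < n := by
        rcases Nat.eq_zero_or_pos n with h0 | h0
        · exact absurd (by rw [hs, h0]; rfl) hne
        · exact h0
      apply (pow_ne n hn).2
      have : ((b:P)^n)⁻¹ = 1 := by rw [← eval_Bs', ← hs, hw]
      simpa using this
    · rw [hs, eA_cons, eA_Bs] at hpar
      simp [eAL] at hpar
    · rw [hs, eA_cons, eA_Bs'] at hpar
      simp [eAL] at hpar
  have hT : (secW w true).length ≠ w.length := by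
    intro he
    rcases (classify w hred).2 he with hs | ⟨n, hs | hs | hs | hs⟩
    · exact hne hs
    · rw [hs, eA_append, eA_Bs] at hpar
      simp [eA, eAL] at hpar
    · rw [hs, eA_append, eA_Bs'] at hpar
      simp [eA, eAL] at hpar
    · -- w = gA :: (Bs n ++ [gA'])
      have hn : 0 < n := by
        rcases Nat.eq_zero_or_pos n with h0 | h0
        · exfalso
          rw [hs, h0] at hred
          rw [Red, List.Chain', List.isChain_cons] at hred
          have := hred.1 Ltr.gA' (by rfl)
          exact this rfl
        · exact h0
      apply (pow_ne n hn).2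
      have hev : eval (Ltr.gA :: (Bs n ++ [Ltr.gA'])) = a * ((b:P)^n * a⁻¹) := by
        rw [eval_cons, eval_append, eval_Bs]
        simp [eval, ltrPerm]
      rw [← hs, hw] at hev
      have : (b:P)^n = a⁻¹ * 1 * a := by
        rw [hev]; group
      simpa using this
    · have hn : 0 < n := by
        rcases Nat.eq_zero_or_pos n with h0 | h0
        · exfalso
          rw [hs, h0] at hred
          rw [Red, List.Chain', List.isChain_cons] at hred
          have := hred.1 Ltr.gA' (by rfl)
          exact this rfl
        · exact h0
      apply (pow_ne n hn).2
      have hev : eval (Ltr.gA :: (Bs' n ++ [Ltr.gA'])) = a * (((b:P)^n)⁻¹ * a⁻¹) := by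
        rw [eval_cons, eval_append, eval_Bs']
        simp [eval, ltrPerm]
      rw [← hs, hw] at hev
      have : ((b:P)^n)⁻¹ = a⁻¹ * 1 * a := by
        rw [hev]; group
      have : ((b:P)^n)⁻¹ = 1 := by simpa using this
      simpa using this
  omega

/-- Key theorem: the exponent sums vanish on relations. -/
lemma expsum_zero : ∀ n (w : List Ltr), w.length = n → eval w = 1 →
    eA w = 0 ∧ eB w = 0 := by
  intro n
  induction n using Nat.strong_induction_on with
  | _ n ih =>
    intro w hlen hw
    by_cases hred : Red w
    · cases w with
      | nil => exact ⟨rfl, rfl⟩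
      | cons l w' =>
        have hne : (l :: w') ≠ [] := by simp
        obtain ⟨hlt0, hlt1⟩ := secW_lt_of_one _ hred hw hne
        have h0 := ih _ (by omega) (secW (l :: w') false) rfl
          (sec_of_one _ hw false).2
        have h1 := ih _ (by omega) (secW (l :: w') true) rfl
          (sec_of_one _ hw true).2
        have hA := secW_eA (l :: w')
        have hB := secW_eB (l :: w')
        constructor
        · rw [← hB, h0.2, h1.2]; ring
        · rw [← hA, h0.1, h1.1]; ring
    · obtain ⟨w', h1, h2, h3, h4⟩ := cancel w hred
      have := ih w'.length (by omega) w' rfl (by rw [h2, hw])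
      rw [← h3, ← h4]
      exact this
lemma exps_wd (w w' : List Ltr) (h : eval w = eval w') :
    eA w = eA w' ∧ eB w = eB w' := by
  have h1 : eval (w ++ invW w') = 1 := by
    rw [eval_append, eval_invW, h, mul_inv_cancel]
  have h2 := expsum_zero _ (w ++ invW w') rfl h1
  rw [eA_append, eA_invW] at h2
  rw [eB_append, eB_invW] at h2
  constructor <;> omega

lemma secW_lt_of_zero (w : List Ltr) (hred : Red w) (hA : eA w = 0) (hB : eB w = 0)
    (hne : w ≠ []) :
    (secW w false).length < w.length ∧ (secW w true).length < w.length := by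
  have hlen := secW_len w
  have hle0 := secW_len_le w false
  have hle1 := secW_len_le w true
  have hF : (secW w false).length ≠ w.length := by
    intro he
    obtain ⟨n, hs | hs | hs | hs⟩ := (classify w hred).1 he
    · have : eB w = n := by rw [hs, eB_Bs]
      have hn : n = 0 := by omega
      exact hne (by rw [hs, hn]; rfl)
    · have : eB w = -n := by rw [hs, eB_Bs']
      have hn : n = 0 := by omega
      exact hne (by rw [hs, hn]; rfl)
    · rw [hs, eA_cons, eA_Bs] at hA
      simp [eAL] at hA
    · rw [hs, eA_cons, eA_Bs'] at hA
      simp [eAL] at hA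
  have hT : (secW w true).length ≠ w.length := by
    intro he
    rcases (classify w hred).2 he with hs | ⟨n, hs | hs | hs | hs⟩
    · exact hne hs
    · rw [hs, eA_append, eA_Bs] at hA
      simp [eA, eAL] at hA
    · rw [hs, eA_append, eA_Bs'] at hA
      simp [eA, eAL] at hA
    · have : eB w = n := by
        rw [hs, eB_cons, eB_append, eB_Bs]
        simp [eBL, eB]
      have hn : n = 0 := by omega
      rw [hs, hn] at hred
      rw [Red, List.Chain', List.isChain_cons] at hred
      exact hred.1 Ltr.gA' (by rfl) rfl
    · have : eB w = -n := by
        rw [hs, eB_cons, eB_append, eB_Bs']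
        simp [eBL, eB]
      have hn : n = 0 := by omega
      rw [hs, hn] at hred
      rw [Red, List.Chain', List.isChain_cons] at hred
      exact hred.1 Ltr.gA' (by rfl) rfl
  omega

lemma secW_mul (u v : List Ltr) (s : Bool) (hv : eA v % 2 = 0) :
    secW (u ++ v) s = secW u s ++ secW v s := by
  rw [secW_append, outS_of_even v s hv]

lemma one_of_secs (w : List Ltr) (hpar : eA w % 2 = 0)
    (h0 : eval (secW w false) = 1) (h1 : eval (secW w true) = 1) :
    eval w = 1 := by
  refine Equiv.ext fun u => ?_
  cases u with
  | nil => rw [eval_nil_apply]; rfl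
  | cons s u =>
    rw [sem, outS_of_even w s hpar]
    cases s
    · rw [h0]; rfl
    · rw [h1]; rfl

lemma sec_inv (w : List Ltr) (hA : eA w % 2 = 0) (s : Bool) :
    eval (secW (invW w) s) = (eval (secW w s))⁻¹ := by
  have h1 : eval (invW w ++ w) = 1 := by
    rw [eval_append, eval_invW, inv_mul_cancel]
  have h2 := (sec_of_one _ h1 s).2
  rw [secW_append, outS_of_even w s hA, eval_append] at h2
  exact eq_inv_of_mul_eq_one_left h2

/-- The positive cone. -/
inductive Pos : P → Prop
  | lex (w : List Ltr) (h : 0 < eA w ∨ (eA w = 0 ∧ 0 < eB w)) : Pos (eval w)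
  | sec0 (w : List Ltr) (hA : eA w = 0) (hB : eB w = 0)
      (hp : Pos (eval (secW w false))) : Pos (eval w)
  | sec1 (w : List Ltr) (hA : eA w = 0) (hB : eB w = 0)
      (hz : eval (secW w false) = 1)
      (hp : Pos (eval (secW w true))) : Pos (eval w)

lemma Pos.ne_one {g : P} (hg : Pos g) : g ≠ 1 := by
  induction hg with
  | lex w h =>
    intro hc
    have := expsum_zero _ w rfl hc
    omega
  | sec0 w hA hB hp ih =>
    intro hc
    exact ih (sec_of_one w hc false).2
  | sec1 w hA hB hz hp ih =>
    intro hc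
    exact ih (sec_of_one w hc true).2

lemma Pos.mul {g : P} (hg : Pos g) : ∀ h : P, Pos h → Pos (g * h) := by
  induction hg with
  | lex w₁ h₁ =>
    intro h hh
    cases hh with
    | lex w₂ h₂ =>
      rw [← eval_append]
      exact Pos.lex _ (by rw [eA_append, eB_append]; omega)
    | sec0 w₂ hA₂ hB₂ _ =>
      rw [← eval_append]
      exact Pos.lex _ (by rw [eA_append, eB_append]; omega)
    | sec1 w₂ hA₂ hB₂ _ _ =>
      rw [← eval_append]
      exact Pos.lex _ (by rw [eA_append, eB_append]; omega)
  | sec0 w₁ hA₁ hB₁ hp ih =>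
    intro h hh
    cases hh with
    | lex w₂ h₂ =>
      rw [← eval_append]
      exact Pos.lex _ (by rw [eA_append, eB_append]; omega)
    | sec0 w₂ hA₂ hB₂ hp₂ =>
      rw [← eval_append]
      refine Pos.sec0 _ (by rw [eA_append]; omega) (by rw [eB_append]; omega) ?_
      rw [secW_mul _ _ _ (by omega), eval_append]
      exact ih _ hp₂
    | sec1 w₂ hA₂ hB₂ hz₂ hp₂ =>
      rw [← eval_append]
      refine Pos.sec0 _ (by rw [eA_append]; omega) (by rw [eB_append]; omega) ?_
      rw [secW_mul _ _ _ (by omega), eval_append, hz₂, mul_one]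
      exact hp
  | sec1 w₁ hA₁ hB₁ hz hp ih =>
    intro h hh
    cases hh with
    | lex w₂ h₂ =>
      rw [← eval_append]
      exact Pos.lex _ (by rw [eA_append, eB_append]; omega)
    | sec0 w₂ hA₂ hB₂ hp₂ =>
      rw [← eval_append]
      refine Pos.sec0 _ (by rw [eA_append]; omega) (by rw [eB_append]; omega) ?_
      rw [secW_mul _ _ _ (by omega), eval_append, hz, one_mul]
      exact hp₂
    | sec1 w₂ hA₂ hB₂ hz₂ hp₂ =>
      rw [← eval_append]
      refine Pos.sec1 _ (by rw [eA_append]; omega) (by rw [eB_append]; omega) ?_ ?_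
      · rw [secW_mul _ _ _ (by omega), eval_append, hz, hz₂, one_mul]
      · rw [secW_mul _ _ _ (by omega), eval_append]
        exact ih _ hp₂

lemma Pos.not_inv {g : P} (hg : Pos g) : ∀ h : P, g * h = 1 → Pos h → False := by
  induction hg with
  | lex w₁ h₁ =>
    intro h hgh hh
    have key : ∀ w₂ : List Ltr, eval w₂ = h →
        eA w₁ + eA w₂ = 0 ∧ eB w₁ + eB w₂ = 0 := by
      intro w₂ hw₂
      have : eval (w₁ ++ w₂) = 1 := by rw [eval_append, hw₂, hgh]
      have := expsum_zero _ (w₁ ++ w₂) rfl this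
      rw [eA_append, eB_append] at this
      exact this
    cases hh with
    | lex w₂ h₂ => have := key w₂ rfl; omega
    | sec0 w₂ hA₂ hB₂ _ => have := key w₂ rfl; omega
    | sec1 w₂ hA₂ hB₂ _ _ => have := key w₂ rfl; omega
  | sec0 w₁ hA₁ hB₁ hp ih =>
    intro h hgh hh
    cases hh with
    | lex w₂ h₂ =>
      have : eval (w₁ ++ w₂) = 1 := by rw [eval_append, hgh]
      have := expsum_zero _ (w₁ ++ w₂) rfl this
      rw [eA_append, eB_append] at this
      omega
    | sec0 w₂ hA₂ hB₂ hp₂ =>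
      have h1 : eval (w₁ ++ w₂) = 1 := by rw [eval_append, hgh]
      have h2 := (sec_of_one _ h1 false).2
      rw [secW_mul _ _ _ (by omega), eval_append] at h2
      exact ih _ h2 hp₂
    | sec1 w₂ hA₂ hB₂ hz₂ hp₂ =>
      have h1 : eval (w₁ ++ w₂) = 1 := by rw [eval_append, hgh]
      have h2 := (sec_of_one _ h1 false).2
      rw [secW_mul _ _ _ (by omega), eval_append, hz₂, mul_one] at h2
      exact hp.ne_one h2
  | sec1 w₁ hA₁ hB₁ hz hp ih =>
    intro h hgh hh
    cases hh with
    | lex w₂ h₂ =>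
      have : eval (w₁ ++ w₂) = 1 := by rw [eval_append, hgh]
      have := expsum_zero _ (w₁ ++ w₂) rfl this
      rw [eA_append, eB_append] at this
      omega
    | sec0 w₂ hA₂ hB₂ hp₂ =>
      have h1 : eval (w₁ ++ w₂) = 1 := by rw [eval_append, hgh]
      have h2 := (sec_of_one _ h1 false).2
      rw [secW_mul _ _ _ (by omega), eval_append, hz, one_mul] at h2
      exact hp₂.ne_one h2
    | sec1 w₂ hA₂ hB₂ hz₂ hp₂ =>
      have h1 : eval (w₁ ++ w₂) = 1 := by rw [eval_append, hgh]
      have h2 := (sec_of_one _ h1 true).2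
      rw [secW_mul _ _ _ (by omega), eval_append] at h2
      exact ih _ h2 hp₂

lemma trichotomy : ∀ n (w : List Ltr), w.length = n →
    eval w = 1 ∨ Pos (eval w) ∨ Pos ((eval w)⁻¹) := by
  intro n
  induction n using Nat.strong_induction_on with
  | _ n ih =>
    intro w hlen
    by_cases hred : Red w
    · by_cases hz : eA w = 0 ∧ eB w = 0
      · cases hw : w with
        | nil => left; rfl
        | cons l w' =>
          rw [← hw]
          have hne : w ≠ [] := by rw [hw]; simp
          obtain ⟨hlt0, hlt1⟩ := secW_lt_of_zero w hred hz.1 hz.2 hne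
          have hwl : 0 < w.length := by rw [hw]; simp
          rcases ih _ (by omega) (secW w false) rfl with h1 | h1 | h1
          · rcases ih _ (by omega) (secW w true) rfl with h2 | h2 | h2
            · left
              exact one_of_secs w (by omega) h1 h2
            · right; left
              exact Pos.sec1 w hz.1 hz.2 h1 h2
            · right; right
              rw [← eval_invW]
              refine Pos.sec1 (invW w) (by rw [eA_invW]; omega)
                (by rw [eB_invW]; omega) ?_ ?_
              · rw [sec_inv w (by omega), h1]; rfl
              · rw [sec_inv w (by omega)]
                exact h2
          · right; left
            exact Pos.sec0 w hz.1 hz.2 h1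
          · right; right
            rw [← eval_invW]
            refine Pos.sec0 (invW w) (by rw [eA_invW]; omega)
              (by rw [eB_invW]; omega) ?_
            rw [sec_inv w (by omega)]
            exact h1
      · by_cases hp : 0 < eA w ∨ (eA w = 0 ∧ 0 < eB w)
        · right; left; exact Pos.lex w hp
        · right; right
          rw [← eval_invW]
          refine Pos.lex (invW w) ?_
          rw [eA_invW, eB_invW]
          omega
    · obtain ⟨w', h1, h2, h3, h4⟩ := cancel w hred
      rw [← h2]
      exact ih _ (by omega) w' rfl
lemma gam_word : ∀ x ∈ Gam, ∃ w : List Ltr, eval w = x := by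
  intro x hx
  induction hx using Subgroup.closure_induction with
  | mem g hg =>
    simp only [Set.mem_insert_iff, Set.mem_singleton_iff] at hg
    rcases hg with rfl | rfl
    · exact ⟨[Ltr.gA], by simp [eval, ltrPerm]⟩
    · exact ⟨[Ltr.gB], by simp [eval, ltrPerm]⟩
  | one => exact ⟨[], rfl⟩
  | mul g h _ _ ihg ihh =>
    obtain ⟨wg, hwg⟩ := ihg
    obtain ⟨wh, hwh⟩ := ihh
    exact ⟨wg ++ wh, by rw [eval_append, hwg, hwh]⟩
  | inv g _ ihg =>
    obtain ⟨wg, hwg⟩ := ihg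
    exact ⟨invW wg, by rw [eval_invW, hwg]⟩

theorem Gam_right_orderable' :
    ∃ le : ↥Gam → ↥Gam → Prop, IsLinearOrder ↥Gam le ∧
      ∀ x y z : ↥Gam, le x y → le (x * z) (y * z) := by
  refine ⟨fun x y => x = y ∨ Pos (((y * x⁻¹ : ↥Gam) : P)), ?_, ?_⟩
  · have hrefl : ∀ x : ↥Gam, x = x ∨ Pos (((x * x⁻¹ : ↥Gam) : P)) :=
      fun x => Or.inl rfl
    have htrans : ∀ x y z : ↥Gam,
        (x = y ∨ Pos (((y * x⁻¹ : ↥Gam) : P))) →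
        (y = z ∨ Pos (((z * y⁻¹ : ↥Gam) : P))) →
        (x = z ∨ Pos (((z * x⁻¹ : ↥Gam) : P))) := by
      intro x y z h1 h2
      rcases h1 with rfl | h1
      · exact h2
      rcases h2 with rfl | h2
      · exact Or.inr h1
      right
      have he : ((z * x⁻¹ : ↥Gam) : P) =
          ((z * y⁻¹ : ↥Gam) : P) * ((y * x⁻¹ : ↥Gam) : P) := by
        push_cast
        group
      rw [he]
      exact h2.mul _ h1
    have hanti : ∀ x y : ↥Gam,
        (x = y ∨ Pos (((y * x⁻¹ : ↥Gam) : P))) →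
        (y = x ∨ Pos (((x * y⁻¹ : ↥Gam) : P))) → x = y := by
      intro x y h1 h2
      rcases h1 with rfl | h1
      · rfl
      rcases h2 with rfl | h2
      · rfl
      exfalso
      refine h1.not_inv _ ?_ h2
      push_cast
      group
    have htot : ∀ x y : ↥Gam,
        (x = y ∨ Pos (((y * x⁻¹ : ↥Gam) : P))) ∨
        (y = x ∨ Pos (((x * y⁻¹ : ↥Gam) : P))) := by
      intro x y
      obtain ⟨w, hw⟩ := gam_word _ (y * x⁻¹).2
      rcases trichotomy w.length w rfl with h | h | h
      · left; left
        have : (y * x⁻¹ : ↥Gam) = 1 := by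
          apply Subtype.ext
          rw [← hw, h]
          rfl
        have := mul_inv_eq_one.mp this
        exact this.symm
      · left; right
        rw [← hw]
        exact h
      · right; right
        have he : ((x * y⁻¹ : ↥Gam) : P) = (eval w)⁻¹ := by
          rw [hw]
          push_cast
          group
        rw [he]
        exact h
    exact { refl := hrefl, trans := htrans, antisymm := hanti, total := htot }
  · intro x y z h
    rcases h with rfl | h
    · exact Or.inl rfl
    right
    have he : (y * z) * (x * z)⁻¹ = y * x⁻¹ := by group
    rw [he]
    exact h

/-- The group `Γ` is right-orderable: there exists a linear order on `Γ`
such that `x ≤ y` implies `x*z ≤ y*z`. -/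
theorem Gam_right_orderable :
    ∃ le : ↥Gam → ↥Gam → Prop, IsLinearOrder ↥Gam le ∧
      ∀ x y z : ↥Gam, le x y → le (x * z) (y * z) := by
  exact Gam_right_orderable'

end PinkGroup
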